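/- arXiv:2302.14519 — 2 statements merged into one kernel-verified Lean document; each statement's English description precedes it below -/
import Mathlib

section
/- Let a : ℕ → ℂ, let χ : ℕ → ℂ be completely multiplicative with |χ(n)| = 1 for every n ≥ 1, and let θ ∈ ℝ. If for every ε > 0 the partial sums of ∑_{n≥1} a(n) n^{-s} converge uniformly on {s : Re s ≥ θ + ε}, then for every ε > 0 the partial sums of the twisted series ∑_{n≥1} a(n) χ(n) n^{-s} also converge uniformly on {s : Re s ≥ θ + ε}. -/
/-!
Bohr's argument. The numbers `log p`, `p` prime, are linearly independent over `ℤ` (unique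
factorization), so by Kronecker's theorem the values `χ p` at the finitely many primes dividing
the elements of a finite set `S` of positive integers are simultaneously approximated by
`p ^ (t * I)` for a suitable real `t`; by complete multiplicativity `χ n` is then approximated by
`n ^ (t * I)` for all `n ∈ S`. Hence every block `∑ n ∈ S, a n * χ n * n ^ (-s)` of the twisted
series is a limit of blocks `∑ n ∈ S, a n * n ^ (-(s - t * I))` of the original series at
vertical translates of `s`, which stay in the half-plane, and the uniform Cauchy criterion
passes to the twist.
-/

open Filter Topology Finset Complex

lemma tendsto_average_exp_mul_I (ω : ℝ) :
    Tendsto (fun T : ℝ => (T : ℂ)⁻¹ * ∫ t in (0 : ℝ)..T, exp (ω * t * I)) atTop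
      (𝓝 (if ω = 0 then 1 else 0)) := by
  rcases eq_or_ne ω 0 with rfl | hω
  · refine tendsto_const_nhds.congr' ?_
    filter_upwards [eventually_ne_atTop 0] with T hT
    simp [hT]
  · rw [if_neg hω]
    have hωI : (ω : ℂ) * I ≠ 0 := by simp [hω]
    have hintegral : ∀ T : ℝ,
        ∫ t in (0 : ℝ)..T, exp (ω * t * I) = (exp (ω * I * T) - 1) / (ω * I) := by
      intro T
      simp_rw [mul_right_comm _ _ I]
      simp [integral_exp_mul_complex hωI]
    have hinv : Tendsto (fun T : ℝ => (T : ℂ)⁻¹) atTop (𝓝 0) := by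
      simpa [Function.comp_def] using (continuous_ofReal.tendsto 0).comp tendsto_inv_atTop_zero
    refine hinv.zero_mul_isBoundedUnder_le (isBoundedUnder_of ⟨2 / ‖(ω : ℂ) * I‖, fun T => ?_⟩)
    simp only [Function.comp_apply, hintegral, norm_div]
    gcongr
    calc ‖exp (ω * I * T) - 1‖ ≤ ‖exp (ω * I * T)‖ + ‖(1 : ℂ)‖ := norm_sub_le _ _
      _ = 2 := by
        rw [show (ω : ℂ) * I * T = ((ω * T : ℝ) : ℂ) * I by push_cast; ring,
          norm_exp_ofReal_mul_I, norm_one]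
        norm_num

lemma tendsto_average_sum_exp_mul_I {α : Type*} (R : Finset α) (c : α → ℂ) (ω : α → ℝ) :
    Tendsto (fun T : ℝ => (T : ℂ)⁻¹ * ∫ t in (0 : ℝ)..T, ∑ r ∈ R, c r * exp (ω r * t * I))
      atTop (𝓝 (∑ r ∈ R, if ω r = 0 then c r else 0)) := by
  have hintegrable : ∀ r T, IntervalIntegrable (fun t : ℝ => c r * exp (ω r * t * I))
      MeasureTheory.volume 0 T := fun r T => by
    apply Continuous.intervalIntegrable
    fun_prop
  have hsum := tendsto_finsetSum R fun r _ => (tendsto_average_exp_mul_I (ω r)).const_mul (c r)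
  refine (hsum.congr fun T => ?_).trans (by simp [mul_ite])
  rw [intervalIntegral.integral_finsetSum fun r _ => hintegrable r T, mul_sum]
  simp only [intervalIntegral.integral_const_mul]
  exact sum_congr rfl fun r _ => mul_left_comm _ _ _

lemma le_of_tendsto_average {F : ℝ → ℝ} (hF : Continuous F) {A L : ℝ} (hle : ∀ t, F t ≤ A)
    (hL : Tendsto (fun T : ℝ => (T : ℂ)⁻¹ * ∫ t in (0 : ℝ)..T, (F t : ℂ)) atTop (𝓝 L)) :
    L ≤ A := by
  have hreal : Tendsto (fun T : ℝ => T⁻¹ * ∫ t in (0 : ℝ)..T, F t) atTop (𝓝 L) := by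
    refine tendsto_ofReal_iff.1 (hL.congr fun T => ?_)
    push_cast [intervalIntegral.integral_ofReal]
    rfl
  refine le_of_tendsto hreal ?_
  filter_upwards [eventually_gt_atTop 0] with T hT
  rw [inv_mul_le_iff₀ hT]
  calc ∫ t in (0 : ℝ)..T, F t ≤ ∫ _ in (0 : ℝ)..T, A :=
        intervalIntegral.integral_mono_on hT.le (hF.intervalIntegrable 0 T)
          intervalIntegrable_const fun t _ => hle t
    _ = T * A := by simp

lemma two_mul_one_add_cos_sub (x y : ℝ) :
    2 * (1 + Real.cos (x - y)) = 4 - ‖exp (x * I) - exp (y * I)‖ ^ 2 := by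
  rw [← normSq_eq_norm_sq, normSq_apply, sub_re, sub_im, exp_ofReal_mul_I_re, exp_ofReal_mul_I_re,
    exp_ofReal_mul_I_im, exp_ofReal_mul_I_im, Real.cos_sub]
  linear_combination Real.sin_sq_add_cos_sq x + Real.sin_sq_add_cos_sq y

lemma two_mul_one_add_cos_pow (m : ℕ) (φ : ℝ) :
    ((2 * (1 + Real.cos φ) : ℝ) : ℂ) ^ m
      = ∑ j ∈ range (2 * m + 1), ((2 * m).choose j : ℂ) * exp (((j : ℝ) - m) * φ * I) := by
  have hinv : exp (-(φ * I)) * exp (φ * I) = 1 := by rw [← exp_add]; simp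
  have hsq : ((2 * (1 + Real.cos φ) : ℝ) : ℂ) = exp (-(φ * I)) * (exp (φ * I) + 1) ^ 2 := by
    have h := two_cos (φ : ℂ)
    rw [neg_mul] at h
    push_cast
    linear_combination h - (2 + exp (φ * I)) * hinv
  rw [hsq, mul_pow, ← exp_nat_mul, ← pow_mul, add_pow, mul_sum]
  refine sum_congr rfl fun j _ => ?_
  rw [one_pow, mul_one, ← exp_nat_mul, ← mul_assoc, ← exp_add, mul_comm]
  congr 2
  push_cast
  ring

lemma exists_pow_mul_pow_lt_one (k : ℕ) {q : ℝ} (hq₀ : 0 ≤ q) (hq₁ : q < 1) :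
    ∃ m : ℕ, (2 * m + 1 : ℝ) ^ k * q ^ m < 1 := by
  have hlim : Tendsto (fun m : ℕ => (2 * m + 1 : ℝ) ^ k * q ^ m) atTop (𝓝 0) := by
    refine squeeze_zero' (.of_forall fun m => by positivity) ?_
      (by simpa using (tendsto_pow_const_mul_const_pow_of_lt_one k hq₀ hq₁).const_mul (3 ^ k))
    filter_upwards [eventually_ge_atTop 1] with m hm
    have : (2 * m + 1 : ℝ) ≤ 3 * m := by
      have : (1 : ℝ) ≤ m := by exact_mod_cast hm
      linarith
    calc (2 * m + 1 : ℝ) ^ k * q ^ m ≤ (3 * m) ^ k * q ^ m := by gcongr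
      _ = 3 ^ k * (m ^ k * q ^ m) := by ring
  exact (hlim.eventually (gt_mem_nhds one_pos)).exists

section Kronecker

variable {ι : Type*} [Fintype ι]

lemma tendsto_average_prod_two_mul_one_add_cos_pow {v : ι → ℝ} (hv : LinearIndependent ℤ v)
    (θ : ι → ℝ) (m : ℕ) :
    Tendsto (fun T : ℝ => (T : ℂ)⁻¹ *
        ∫ t in (0 : ℝ)..T, ((∏ i, (2 * (1 + Real.cos (t * v i - θ i))) ^ m : ℝ) : ℂ))
      atTop (𝓝 (((2 * m).choose m : ℂ) ^ Fintype.card ι)) := by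
  classical
  set R := Fintype.piFinset fun _ : ι => range (2 * m + 1)
  set ω : (ι → ℕ) → ℝ := fun r => ∑ i, ((r i : ℝ) - m) * v i
  set c : (ι → ℕ) → ℂ := fun r =>
    (∏ i, ((2 * m).choose (r i) : ℂ)) * exp (-(∑ i, ((r i : ℝ) - m) * θ i : ℝ) * I)
  have hexpand : ∀ t : ℝ, ((∏ i, (2 * (1 + Real.cos (t * v i - θ i))) ^ m : ℝ) : ℂ)
      = ∑ r ∈ R, c r * exp (ω r * t * I) := by
    intro t
    simp_rw [ofReal_prod, ofReal_pow, two_mul_one_add_cos_pow, prod_univ_sum]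
    refine sum_congr rfl fun r _ => ?_
    rw [prod_mul_distrib, ← exp_sum, mul_assoc, ← exp_add]
    congr 2
    simp only [ω, ofReal_sum, ofReal_mul, ofReal_sub, ofReal_natCast, sum_mul,
      ← sum_neg_distrib, ← sum_add_distrib]
    exact sum_congr rfl fun i _ => by ring
  have hω : ∀ r, ω r = 0 ↔ r = fun _ => m := by
    refine fun r => ⟨fun h => funext fun i => ?_, fun h => by simp [ω, h]⟩
    have := Fintype.linearIndependent_iff.1 hv (fun i => (r i : ℤ) - m) (by simpa [ω] using h) i
    omega
  have hmean :
      ∑ r ∈ R, (if ω r = 0 then c r else 0) = ((2 * m).choose m : ℂ) ^ Fintype.card ι := by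
    simp_rw [hω]
    rw [sum_ite_eq', if_pos (Fintype.mem_piFinset.2 fun _ => mem_range.2 (by omega))]
    simp [c]
  simp_rw [hexpand, ← hmean]
  exact tendsto_average_sum_exp_mul_I R c ω

lemma prod_two_mul_one_add_cos_pow_le {x θ : ι → ℝ} {δ : ℝ} (hδ : 0 ≤ δ) {i₀ : ι}
    (hi₀ : δ ≤ ‖exp (x i₀ * I) - exp (θ i₀ * I)‖) (m : ℕ) :
    ∏ i, (2 * (1 + Real.cos (x i - θ i))) ^ m
      ≤ (4 : ℝ) ^ (m * Fintype.card ι) * (1 - δ ^ 2 / 4) ^ m := by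
  classical
  have hfactor : ∀ i, 0 ≤ 2 * (1 + Real.cos (x i - θ i)) ∧ 2 * (1 + Real.cos (x i - θ i)) ≤ 4 :=
    fun i => ⟨by nlinarith [Real.neg_one_le_cos (x i - θ i)],
      by nlinarith [Real.cos_le_one (x i - θ i)]⟩
  have hfar : 2 * (1 + Real.cos (x i₀ - θ i₀)) ≤ 4 * (1 - δ ^ 2 / 4) := by
    rw [two_mul_one_add_cos_sub]
    nlinarith [pow_le_pow_left₀ hδ hi₀ 2]
  calc ∏ i, (2 * (1 + Real.cos (x i - θ i))) ^ m
      ≤ ∏ i, (4 : ℝ) ^ m * (if i = i₀ then (1 - δ ^ 2 / 4) ^ m else 1) := by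
        refine prod_le_prod (fun i _ => pow_nonneg (hfactor i).1 m) fun i _ => ?_
        split_ifs with h
        · subst h
          rw [← mul_pow]
          exact pow_le_pow_left₀ (hfactor i).1 hfar m
        · rw [mul_one]
          exact pow_le_pow_left₀ (hfactor i).1 (hfactor i).2 m
    _ = (4 : ℝ) ^ (m * Fintype.card ι) * (1 - δ ^ 2 / 4) ^ m := by
        rw [prod_mul_distrib, prod_const, prod_ite_eq' univ i₀, if_pos (mem_univ _), card_univ,
          pow_mul]

theorem kronecker_approximation {v : ι → ℝ} (hv : LinearIndependent ℤ v) {z : ι → ℂ}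
    (hz : ∀ i, ‖z i‖ = 1) :
    z ∈ closure (Set.range fun (t : ℝ) (i : ι) => exp (t * v i * I)) := by
  set θ : ι → ℝ := fun i => arg (z i)
  have hzθ : ∀ i, z i = exp (θ i * I) := fun i => by
    simpa [hz i] using (norm_mul_exp_arg_mul_I (z i)).symm
  rw [Metric.mem_closure_range_iff]
  intro δ hδ
  by_contra! hnone
  have hbad : ∀ t : ℝ, ∃ i, δ ≤ ‖exp ((t * v i : ℝ) * I) - exp (θ i * I)‖ := fun t => by
    obtain ⟨i, hi⟩ := not_forall.1 fun h => (hnone t).not_gt ((dist_pi_lt_iff hδ).2 h)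
    refine ⟨i, ?_⟩
    simpa [dist_eq_norm', hzθ, not_lt] using hi
  set k := Fintype.card ι
  set q := 1 - δ ^ 2 / 4
  have hq₀ : 0 ≤ q := by
    obtain ⟨i, hi⟩ := hbad 0
    have : ‖exp ((0 * v i : ℝ) * I) - exp (θ i * I)‖ ≤ 2 :=
      (norm_sub_le _ _).trans (by simp [norm_exp_ofReal_mul_I]; norm_num)
    simp only [q]
    nlinarith [hi.trans this]
  -- Average `F t = ∏ i, (2 * (1 + cos (t * v i - θ i))) ^ m` over `[0, T]`: by independence
  -- its mean is `C(2m, m) ^ k ≥ (4 ^ m / (2m + 1)) ^ k`, but since no `t` works,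
  -- `F ≤ 4 ^ (m * k) * q ^ m` everywhere, which is smaller for the `m` chosen here.
  obtain ⟨m, hm⟩ := exists_pow_mul_pow_lt_one k hq₀ (by simp [q]; positivity)
  have hmean : ((2 * m).choose m : ℝ) ^ k ≤ 4 ^ (m * k) * q ^ m := by
    have hlim := tendsto_average_prod_two_mul_one_add_cos_pow hv θ m
    rw [← ofReal_natCast, ← ofReal_pow] at hlim
    refine le_of_tendsto_average (hL := hlim) (by fun_prop) fun t => ?_
    obtain ⟨i, hi⟩ := hbad t
    exact prod_two_mul_one_add_cos_pow_le hδ.le hi m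
  have hbinom : (4 : ℝ) ^ m ≤ (2 * m + 1) * (2 * m).choose m := by
    exact_mod_cast Nat.four_pow_le_two_mul_add_one_mul_central_binom m
  have : (4 : ℝ) ^ (m * k) < 4 ^ (m * k) := calc
    (4 : ℝ) ^ (m * k) = (4 ^ m) ^ k := pow_mul _ _ _
    _ ≤ (2 * m + 1) ^ k * (2 * m).choose m ^ k := by rw [← mul_pow]; gcongr
    _ ≤ (2 * m + 1) ^ k * (4 ^ (m * k) * q ^ m) := by gcongr
    _ = 4 ^ (m * k) * ((2 * m + 1) ^ k * q ^ m) := by ring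
    _ < 4 ^ (m * k) := mul_lt_of_lt_one_right (by positivity) hm
  exact lt_irrefl _ this

end Kronecker

lemma padicValRat_prod_zpow_prime {ι : Type*} (q : ℕ) [Fact q.Prime] (s : Finset ι)
    (p : ι → ℕ) (hp : ∀ i, (p i).Prime) (g : ι → ℤ) :
    padicValRat q (∏ i ∈ s, (p i : ℚ) ^ g i) = ∑ i ∈ s, if p i = q then g i else 0 := by
  classical
  induction s using Finset.induction_on with
  | empty => simp
  | insert i s hi ih =>
    have hpi : (p i : ℚ) ≠ 0 := by exact_mod_cast (hp i).ne_zero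
    rw [prod_insert hi, sum_insert hi, padicValRat.mul (zpow_ne_zero _ hpi)
      (prod_ne_zero_iff.2 fun j _ => zpow_ne_zero _ (by exact_mod_cast (hp j).ne_zero)), ih,
      padicValRat.zpow, padicValRat.of_nat]
    have := Fact.mk (hp i)
    split_ifs with h
    · simp [h, padicValNat_self]
    · simp [padicValNat_primes (Ne.symm h)]

lemma linearIndependent_int_log_prime :
    LinearIndependent ℤ fun p : {p : ℕ // p.Prime} => Real.log p := by
  rw [linearIndependent_iff']
  intro s g hg q hq
  let x : ℚ := ∏ p ∈ s, ((p : ℕ) : ℚ) ^ g p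
  have hx : x = 1 := by
    have hpos : (0 : ℝ) < x := by
      simp only [x, Rat.cast_prod, Rat.cast_zpow, Rat.cast_natCast]
      exact prod_pos fun p _ => zpow_pos (by exact_mod_cast p.2.pos) _
    have hlog : Real.log (x : ℝ) = 0 := by
      simp only [x, Rat.cast_prod, Rat.cast_zpow, Rat.cast_natCast]
      rw [Real.log_prod fun p _ => zpow_ne_zero _ (Nat.cast_ne_zero.2 p.2.ne_zero)]
      simpa [Real.log_zpow, zsmul_eq_mul] using hg
    exact_mod_cast Real.eq_one_of_pos_of_log_eq_zero hpos hlog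
  have := Fact.mk q.2
  have hval : padicValRat q x = g q := by
    simpa [Subtype.val_inj, hq] using
      padicValRat_prod_zpow_prime q s (fun p => p) (fun p => p.2) g
  simpa [hx] using hval.symm

lemma eq_prod_pow_factorization {M : Type*} [CommMonoid M] {f : ℕ → M} (hf1 : f 1 = 1)
    (hmul : ∀ m n : ℕ, 1 ≤ m → 1 ≤ n → f (m * n) = f m * f n) {n : ℕ} (hn : n ≠ 0)
    {P : Finset ℕ} (hP : n.primeFactors ⊆ P) :
    f n = ∏ p ∈ P, f p ^ n.factorization p := by
  have hpow : ∀ p k, p ≠ 0 → f (p ^ k) = f p ^ k := by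
    intro p k hp
    induction k with
    | zero => simp [hf1]
    | succ k ih =>
      rw [pow_succ, hmul _ _ (pow_pos (Nat.pos_of_ne_zero hp) k) (Nat.pos_of_ne_zero hp), ih,
        pow_succ]
  have hcoprime : ∀ x y, x.Coprime y → f (x * y) = f x * f y := by
    intro x y hxy
    rcases Nat.eq_zero_or_pos x with rfl | hx
    · simp [(Nat.coprime_zero_left y).1 hxy, hf1]
    rcases Nat.eq_zero_or_pos y with rfl | hy
    · simp [(Nat.coprime_zero_right x).1 hxy, hf1]
    exact hmul x y hx hy
  rw [Nat.multiplicative_factorization f hcoprime hf1 hn,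
    Finsupp.prod_congr fun p hp => hpow p _ (Nat.prime_of_mem_primeFactors hp).ne_zero,
    Finsupp.prod_of_support_subset _ hP _ fun _ _ => pow_zero _]

lemma mem_closure_range_cpow {χ : ℕ → ℂ} (hχ1 : χ 1 = 1)
    (hχmul : ∀ m n : ℕ, 1 ≤ m → 1 ≤ n → χ (m * n) = χ m * χ n)
    (hχabs : ∀ p : ℕ, p.Prime → ‖χ p‖ = 1) {S : Finset ℕ} (hS : 0 ∉ S) :
    (fun n : S => χ n) ∈ closure (Set.range fun (t : ℝ) (n : S) => (n : ℂ) ^ (t * I)) := by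
  set P := S.biUnion Nat.primeFactors
  have hprime : ∀ p : P, (p : ℕ).Prime := fun p => by
    obtain ⟨n, -, hn⟩ := mem_biUnion.1 p.2
    exact Nat.prime_of_mem_primeFactors hn
  have hn0 : ∀ n : S, (n : ℕ) ≠ 0 := fun n h => hS (h ▸ n.2)
  have hP : ∀ n : S, (n : ℕ).primeFactors ⊆ P := fun n => subset_biUnion_of_mem _ n.2
  have hχP : (fun p : P => χ p) ∈
      closure (Set.range fun (t : ℝ) (p : P) => exp (t * Real.log (p : ℕ) * I)) :=
    kronecker_approximation (z := fun p : P => χ p)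
      (linearIndependent_int_log_prime.comp (fun p : P => ⟨p, hprime p⟩)
        fun p q h => Subtype.ext (by simpa using h)) fun p => hχabs p (hprime p)
  -- `Φ` rebuilds a completely multiplicative function on `S` from its values on `P`.
  let Φ : (P → ℂ) → S → ℂ := fun u n => ∏ p : P, u p ^ (n : ℕ).factorization p
  have hΦχ : Φ (fun p : P => χ p) = fun n : S => χ n := funext fun n => by
    rw [eq_prod_pow_factorization hχ1 hχmul (hn0 n) (hP n), ← prod_coe_sort P]
  rw [← hΦχ]
  refine map_mem_closure (by fun_prop) hχP ?_
  rintro _ ⟨t, rfl⟩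
  refine ⟨t, funext fun n => ?_⟩
  dsimp only [Φ]
  rw [eq_prod_pow_factorization (f := fun n : ℕ => (n : ℂ) ^ (t * I)) (by simp)
    (fun m n _ _ => by push_cast; exact natCast_mul_natCast_cpow m n _) (hn0 n) (hP n),
    ← prod_coe_sort P]
  refine prod_congr rfl fun p _ => ?_
  rw [cpow_def_of_ne_zero (Nat.cast_ne_zero.2 (hprime p).ne_zero), ← natCast_log]
  ring_nf

lemma norm_sum_mul_le_of_forall_norm_sum_cpow_le {χ : ℕ → ℂ} (hχ1 : χ 1 = 1)
    (hχmul : ∀ m n : ℕ, 1 ≤ m → 1 ≤ n → χ (m * n) = χ m * χ n)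
    (hχabs : ∀ p : ℕ, p.Prime → ‖χ p‖ = 1) {S : Finset ℕ} (hS : 0 ∉ S) (b : ℕ → ℂ) {B : ℝ}
    (hB : ∀ t : ℝ, ‖∑ n ∈ S, b n * (n : ℂ) ^ (t * I)‖ ≤ B) :
    ‖∑ n ∈ S, b n * χ n‖ ≤ B := by
  have hclosed : IsClosed {u : S → ℂ | ‖∑ n : S, b n * u n‖ ≤ B} :=
    isClosed_le (by fun_prop) continuous_const
  have hrange : Set.range (fun (t : ℝ) (n : S) => (n : ℂ) ^ (t * I)) ⊆
      {u : S → ℂ | ‖∑ n : S, b n * u n‖ ≤ B} := by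
    rintro _ ⟨t, rfl⟩
    have := hB t
    rwa [← sum_coe_sort] at this
  rw [← sum_coe_sort]
  exact hclosed.closure_subset_iff.2 hrange (mem_closure_range_cpow hχ1 hχmul hχabs hS)

lemma sum_Icc_one_sub_sum_Icc_one {M : Type*} [AddCommGroup M] (f : ℕ → M) {m n : ℕ}
    (h : m ≤ n) : ∑ k ∈ Icc 1 n, f k - ∑ k ∈ Icc 1 m, f k = ∑ k ∈ Ioc m n, f k := by
  rw [sub_eq_iff_eq_add', ← zero_add 1, Icc_add_one_left_eq_Ioc, Icc_add_one_left_eq_Ioc,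
    sum_Ioc_consecutive f (Nat.zero_le m) h]

lemma uniformCauchySeqOn_twist {a χ : ℕ → ℂ} (hχ1 : χ 1 = 1)
    (hχmul : ∀ m n : ℕ, 1 ≤ m → 1 ≤ n → χ (m * n) = χ m * χ n)
    (hχabs : ∀ p : ℕ, p.Prime → ‖χ p‖ = 1) {H : Set ℂ} (hH : ∀ s ∈ H, ∀ t : ℝ, s - t * I ∈ H)
    (h : UniformCauchySeqOn (fun (N : ℕ) (s : ℂ) => ∑ n ∈ Icc 1 N, a n * (n : ℂ) ^ (-s))
      atTop H) :
    UniformCauchySeqOn (fun (N : ℕ) (s : ℂ) => ∑ n ∈ Icc 1 N, a n * χ n * (n : ℂ) ^ (-s))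
      atTop H := by
  rw [Metric.uniformCauchySeqOn_iff] at h ⊢
  intro δ hδ
  obtain ⟨N₀, hN₀⟩ := h (δ / 2) (half_pos hδ)
  have htail : ∀ M N, N₀ ≤ M → M ≤ N → ∀ s ∈ H,
      ‖∑ n ∈ Ioc M N, a n * χ n * (n : ℂ) ^ (-s)‖ ≤ δ / 2 := by
    intro M N hM hMN s hs
    simp_rw [mul_right_comm (a _) (χ _)]
    refine norm_sum_mul_le_of_forall_norm_sum_cpow_le hχ1 hχmul hχabs (by simp) _ fun t => ?_
    have hshift := hN₀ N (hM.trans hMN) M hM (s - t * I) (hH s hs t)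
    rw [dist_eq_norm, sum_Icc_one_sub_sum_Icc_one _ hMN] at hshift
    refine le_of_eq_of_le (congrArg norm (sum_congr rfl fun n hn => ?_)) hshift.le
    have hn : (n : ℂ) ≠ 0 := Nat.cast_ne_zero.2 (mem_Ioc.1 hn).1.ne_bot
    rw [mul_assoc, ← cpow_add _ _ hn, neg_sub, sub_eq_neg_add]
  refine ⟨N₀, fun M hM N hN s hs => ?_⟩
  rcases le_total M N with hMN | hNM
  · rw [dist_comm, dist_eq_norm, sum_Icc_one_sub_sum_Icc_one _ hMN]
    exact (htail M N hM hMN s hs).trans_lt (half_lt_self hδ)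
  · rw [dist_eq_norm, sum_Icc_one_sub_sum_Icc_one _ hNM]
    exact (htail N M hN hNM s hs).trans_lt (half_lt_self hδ)

/-- Twisting by a completely multiplicative unimodular `χ` preserves the
abscissa of uniform convergence: if the partial sums of `∑ a(n) n^{-s}` converge
uniformly on `{Re s ≥ θ + ε}` for every `ε > 0`, so do those of `∑ a(n) χ(n) n^{-s}`. -/
theorem twist_preserves_uniform_convergence
    (a χ : ℕ → ℂ)
    (hχ1 : χ 1 = 1)
    (hχmul : ∀ m n : ℕ, 1 ≤ m → 1 ≤ n → χ (m * n) = χ m * χ n)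
    (hχabs : ∀ n : ℕ, 1 ≤ n → ‖χ n‖ = 1)
    (θ : ℝ)
    (hunif : ∀ ε > (0 : ℝ), ∃ g : ℂ → ℂ,
      TendstoUniformlyOn (fun (N : ℕ) (s : ℂ) => ∑ n ∈ Finset.Icc 1 N, a n * (n : ℂ) ^ (-s))
        g atTop {s : ℂ | θ + ε ≤ s.re}) :
    ∀ ε > (0 : ℝ), ∃ g : ℂ → ℂ,
      TendstoUniformlyOn
        (fun (N : ℕ) (s : ℂ) => ∑ n ∈ Finset.Icc 1 N, a n * χ n * (n : ℂ) ^ (-s))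
        g atTop {s : ℂ | θ + ε ≤ s.re} := by
  intro ε hε
  obtain ⟨g, hg⟩ := hunif ε hε
  have hcauchy := uniformCauchySeqOn_twist hχ1 hχmul (fun p hp => hχabs p hp.one_lt.le)
    (fun s hs t => by simpa using hs) hg.uniformCauchySeqOn
  exact ⟨fun s => limUnder atTop fun N => ∑ n ∈ Icc 1 N, a n * χ n * (n : ℂ) ^ (-s),
    hcauchy.tendstoUniformlyOn_of_tendsto fun s hs => (hcauchy.cauchySeq hs).tendsto_limUnder⟩
end

section
/- Let a : ℕ → ℂ, let χ : ℕ → ℂ be completely multiplicative with |χ(n)| = 1 for every n ≥ 1, and let θ ∈ ℝ. Suppose the partial sums of f(s) = ∑_{n≥1} a(n) n^{-s} converge uniformly on {s : Re s > θ} (so both f and the twisted sum f_χ(s) = ∑_{n≥1} a(n) χ(n) n^{-s} define analytic functions on ℂ_θ = {s : Re s > θ}). Then the image sets coincide: {f_χ(s) : Re s > θ} = {f(s) : Re s > θ}. -/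
/-!
Kronecker's theorem for the numbers `log p` gives times `t k` with `n ^ (-i t k) → χ n` for every
`n ≥ 1`: it suffices to approximate `χ` at finitely many primes, which is done by Bohr's mean-value
argument, and complete multiplicativity does the rest. The partial sums being uniformly Cauchy on
the half-plane, the vertical translates `f (s + i t k)` then converge uniformly to the twisted sum
`f_χ`, and symmetrically (with `χ⁻¹`) translates of `f_χ` converge uniformly to `f`. By Hurwitz's
theorem every value of a non-constant uniform limit of translates is a value of a translate, so
each image contains the other; if one function is constant, so is the other, with the same value.
-/

open Filter Topology Complex Finset ComplexConjugate

section UniformLimits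

variable {α β : Type*} [PseudoMetricSpace β]

theorem tendstoUniformlyOn_of_dist_le {ι : Type*} {F : ι → α → β} {f : α → β} {l : Filter ι}
    {s : Set α} {b : ι → ℝ} (hb : Tendsto b l (𝓝 0))
    (h : ∀ i, ∀ x ∈ s, dist (f x) (F i x) ≤ b i) : TendstoUniformlyOn F f l s := by
  rw [Metric.tendstoUniformlyOn_iff]
  intro ε hε
  filter_upwards [hb.eventually_lt_const hε] with i hi x hx using (h i x hx).trans_lt hi

theorem exists_tendstoUniformlyOn_of_tendstoUniformlyOn_comp [CompleteSpace β]
    {S T : ℕ → α → β} {f : α → β} {φ : ℕ → α → α} {s : Set α} (hφ : ∀ k, Set.MapsTo (φ k) s s)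
    (hS : TendstoUniformlyOn S f atTop s)
    (hST : ∀ N, TendstoUniformlyOn (fun k x => S N (φ k x)) (T N) atTop s) :
    ∃ g, TendstoUniformlyOn T g atTop s ∧
      TendstoUniformlyOn (fun k x => f (φ k x)) g atTop s := by
  have hT : UniformCauchySeqOn T atTop s := by
    rw [Metric.uniformCauchySeqOn_iff]
    intro ε hε
    obtain ⟨N₀, hN₀⟩ :=
      Metric.uniformCauchySeqOn_iff.mp hS.uniformCauchySeqOn (ε / 2) (half_pos hε)
    refine ⟨N₀, fun M hM N hN x hx => ?_⟩
    have hle : dist (T M x) (T N x) ≤ ε / 2 :=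
      le_of_tendsto (((hST M).tendsto_at hx).dist ((hST N).tendsto_at hx))
        (Eventually.of_forall fun k => (hN₀ M hM N hN _ (hφ k hx)).le)
    linarith
  have hlim : ∀ x, ∃ y, x ∈ s → Tendsto (fun N => T N x) atTop (𝓝 y) := fun x => by
    by_cases hx : x ∈ s
    · obtain ⟨y, hy⟩ := cauchySeq_tendsto_of_complete (hT.cauchySeq hx)
      exact ⟨y, fun _ => hy⟩
    · exact ⟨f x, fun h => absurd h hx⟩
  choose g hg using hlim
  have hTg : TendstoUniformlyOn T g atTop s :=
    hT.tendstoUniformlyOn_of_tendsto fun x hx => hg x hx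
  refine ⟨g, hTg, Metric.tendstoUniformlyOn_iff.mpr fun ε hε => ?_⟩
  obtain ⟨N, hSf, hTN⟩ := ((Metric.tendstoUniformlyOn_iff.mp hS (ε / 3) (by positivity)).and
    (Metric.tendstoUniformlyOn_iff.mp hTg (ε / 3) (by positivity))).exists
  filter_upwards [Metric.tendstoUniformlyOn_iff.mp (hST N) (ε / 3) (by positivity)]
    with k hk x hx
  calc dist (g x) (f (φ k x))
      ≤ dist (g x) (T N x) + dist (T N x) (S N (φ k x)) + dist (S N (φ k x)) (f (φ k x)) :=
        dist_triangle4 _ _ _ _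
    _ < ε / 3 + ε / 3 + ε / 3 := by
        gcongr
        · exact hTN x hx
        · exact hk x hx
        · rw [dist_comm]; exact hSf _ (hφ k hx)
    _ = ε := by ring

end UniformLimits

section TrigonometricPolynomial

theorem exp_ofReal_mul_I_mul_conj (x y : ℝ) :
    exp (↑x * I) * conj (exp (↑y * I)) = exp (↑(x - y) * I) := by
  rw [← exp_conj, ← exp_add, map_mul, conj_ofReal, conj_I]
  push_cast
  ring_nf

theorem norm_integral_exp_ofReal_mul_I_le {ω : ℝ} (hω : ω ≠ 0) (T : ℝ) :
    ‖∫ t in (0 : ℝ)..T, exp (↑(ω * t) * I)‖ ≤ 2 / |ω| := by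
  have hc : (ω : ℂ) * I ≠ 0 := mul_ne_zero (ofReal_ne_zero.mpr hω) I_ne_zero
  have hexp : ∀ t : ℝ, exp (↑(ω * t) * I) = exp (ω * I * t) := fun t => by push_cast; ring_nf
  simp_rw [hexp]
  rw [integral_exp_mul_complex hc, norm_div, norm_mul, norm_I, mul_one, norm_real,
    Real.norm_eq_abs]
  gcongr
  calc ‖exp (ω * I * T) - exp (ω * I * (0 : ℝ))‖
      ≤ ‖exp (ω * I * T)‖ + ‖exp (ω * I * (0 : ℝ))‖ := norm_sub_le _ _
    _ = 2 := by rw [← hexp, ← hexp, norm_exp_ofReal_mul_I, norm_exp_ofReal_mul_I]; norm_num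

variable {ι : Type*} [DecidableEq ι] (A : Finset ι) (c : ι → ℂ) (ω : ι → ℝ)

/-- The diagonal terms of `‖∑ c α e^{i ω α t}‖²` integrate to `T ∑ ‖c α‖²`, the cross terms
to something bounded independently of `T`. -/
theorem sub_le_integral_norm_sum_exp_sq (hω : Set.InjOn ω A) (T : ℝ) :
    T * ∑ α ∈ A, ‖c α‖ ^ 2 - ∑ α ∈ A, ∑ β ∈ A.erase α, ‖c α‖ * ‖c β‖ * (2 / |ω α - ω β|) ≤
      ∫ t in (0 : ℝ)..T, ‖∑ α ∈ A, c α * exp (↑(ω α * t) * I)‖ ^ 2 := by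
  set D : ι → ι → ℂ := fun α β => ∫ t in (0 : ℝ)..T, exp (↑((ω α - ω β) * t) * I)
  set R : ℂ := ∑ α ∈ A, ∑ β ∈ A.erase α, c α * conj (c β) * D α β
  have hint : ∀ α β, IntervalIntegrable (fun t : ℝ => c α * conj (c β) *
      exp (↑((ω α - ω β) * t) * I)) MeasureTheory.volume 0 T := fun α β =>
    (by fun_prop : Continuous _).intervalIntegrable _ _
  have hsq : ∀ t : ℝ, ((‖∑ α ∈ A, c α * exp (↑(ω α * t) * I)‖ ^ 2 : ℝ) : ℂ) =
      ∑ α ∈ A, ∑ β ∈ A, c α * conj (c β) * exp (↑((ω α - ω β) * t) * I) := by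
    intro t
    rw [ofReal_pow, ← mul_conj', map_sum, sum_mul_sum]
    refine sum_congr rfl fun α _ => sum_congr rfl fun β _ => ?_
    rw [map_mul, sub_mul, ← exp_ofReal_mul_I_mul_conj]
    ring
  have hexpand : ((∫ t in (0 : ℝ)..T, ‖∑ α ∈ A, c α * exp (↑(ω α * t) * I)‖ ^ 2 : ℝ) : ℂ) =
      ((T * ∑ α ∈ A, ‖c α‖ ^ 2 : ℝ) : ℂ) + R := by
    rw [← intervalIntegral.integral_ofReal]
    simp_rw [hsq]
    rw [intervalIntegral.integral_finsetSum fun α _ =>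
      (continuous_finsetSum _ fun β _ => by fun_prop).intervalIntegrable _ _]
    simp_rw [intervalIntegral.integral_finsetSum fun β _ => hint _ β,
      intervalIntegral.integral_const_mul]
    rw [mul_sum, ofReal_sum, ← sum_add_distrib]
    refine sum_congr rfl fun α hα => ?_
    rw [← add_sum_erase _ _ hα, sub_self]
    simp only [zero_mul, ofReal_zero, exp_zero, intervalIntegral.integral_const,
      sub_zero, real_smul, mul_one, mul_conj', D]
    push_cast
    ring
  have hR : ‖R‖ ≤ ∑ α ∈ A, ∑ β ∈ A.erase α, ‖c α‖ * ‖c β‖ * (2 / |ω α - ω β|) := by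
    refine norm_sum_le_of_le _ fun α hα => norm_sum_le_of_le _ fun β hβ => ?_
    have hne : ω α - ω β ≠ 0 :=
      sub_ne_zero.mpr fun h => ne_of_mem_erase hβ (hω (mem_of_mem_erase hβ) hα h.symm)
    rw [norm_mul, norm_mul, RCLike.norm_conj]
    gcongr
    exact norm_integral_exp_ofReal_mul_I_le hne T
  have hre := congrArg re hexpand
  rw [ofReal_re, add_re, ofReal_re] at hre
  linarith [neg_le_of_abs_le (abs_re_le_norm R)]

theorem sum_norm_sq_le_of_forall_norm_sum_exp_le (hω : Set.InjOn ω A) {B : ℝ}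
    (hB : ∀ t : ℝ, ‖∑ α ∈ A, c α * exp (↑(ω α * t) * I)‖ ≤ B) :
    ∑ α ∈ A, ‖c α‖ ^ 2 ≤ B ^ 2 := by
  set E₀ := ∑ α ∈ A, ∑ β ∈ A.erase α, ‖c α‖ * ‖c β‖ * (2 / |ω α - ω β|)
  have hbound : ∀ T > 0, ∑ α ∈ A, ‖c α‖ ^ 2 ≤ B ^ 2 + E₀ / T := by
    intro T hT
    have hup : ∫ t in (0 : ℝ)..T, ‖∑ α ∈ A, c α * exp (↑(ω α * t) * I)‖ ^ 2 ≤ T * B ^ 2 := by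
      calc _ ≤ ∫ _ in (0 : ℝ)..T, B ^ 2 :=
            intervalIntegral.integral_mono_on hT.le
              ((by fun_prop : Continuous _).intervalIntegrable _ _) intervalIntegrable_const
              fun t _ => pow_le_pow_left₀ (norm_nonneg _) (hB t) 2
        _ = T * B ^ 2 := by simp
    have hlow := sub_le_integral_norm_sum_exp_sq A c ω hω T
    refine le_of_mul_le_mul_left ?_ hT
    rw [mul_add, mul_div_cancel₀ _ hT.ne']
    linarith
  refine ge_of_tendsto ?_ ((eventually_gt_atTop 0).mono hbound)
  have hlim : Tendsto (fun T : ℝ => B ^ 2 + E₀ / T) atTop (𝓝 (B ^ 2 + 0)) :=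
    tendsto_const_nhds.add (tendsto_const_nhds.div_atTop tendsto_id)
  rwa [add_zero] at hlim

end TrigonometricPolynomial

noncomputable def natCpowHom (s : ℂ) : ℕ →* ℂ where
  toFun n := (n : ℂ) ^ s
  map_one' := by simp
  map_mul' m n := by rw [Nat.cast_mul, natCast_mul_natCast_cpow]

@[simp]
theorem natCpowHom_apply (s : ℂ) (n : ℕ) : natCpowHom s n = (n : ℂ) ^ s := rfl

theorem norm_natCast_cpow_neg_I_mul {n : ℕ} (hn : 0 < n) (t : ℝ) :
    ‖(n : ℂ) ^ (-(I * t))‖ = 1 := by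
  simp [norm_natCast_cpow_of_pos hn]

theorem natCast_cpow_neg_I_mul {n : ℕ} (hn : n ≠ 0) (t : ℝ) :
    (n : ℂ) ^ (-(I * t)) = exp (↑(-Real.log n * t) * I) := by
  rw [cpow_def_of_ne_zero (Nat.cast_ne_zero.mpr hn), ← ofReal_natCast,
    ← ofReal_log (Nat.cast_nonneg n)]
  push_cast
  ring_nf

theorem inv_add_one_le_sum_sq_choose (k : ℕ) :
    ((k : ℝ) + 1)⁻¹ ≤ ∑ r ∈ range (k + 1), ((2 : ℝ)⁻¹ ^ k * k.choose r) ^ 2 := by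
  have hsum : ∑ r ∈ range (k + 1), ((2 : ℝ)⁻¹ ^ k * k.choose r) = 1 := by
    rw [← mul_sum, ← Nat.cast_sum, Nat.sum_range_choose]
    push_cast
    rw [inv_pow, inv_mul_cancel₀ (by positivity)]
  have hCS := sq_sum_le_card_mul_sum_sq (s := range (k + 1))
    (f := fun r => (2 : ℝ)⁻¹ ^ k * k.choose r)
  rw [hsum, card_range, one_pow] at hCS
  rw [inv_le_iff_one_le_mul₀ (by positivity)]
  push_cast at hCS
  linarith

section Kronecker

variable {ι : Type*} [Fintype ι] {p : ι → ℕ}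

theorem factorization_prod_pow_apply (hp : ∀ i, (p i).Prime) (hinj : Function.Injective p)
    (α : ι → ℕ) (i : ι) : (∏ j, p j ^ α j).factorization (p i) = α i := by
  rw [Nat.factorization_prod fun j _ => pow_ne_zero _ (hp j).ne_zero, Finset.sum_apply',
    Finset.sum_eq_single i]
  · simp [(hp i).factorization_pow]
  · intro j _ hji
    simp [(hp j).factorization_pow, hinj.ne hji]
  · simp

theorem injective_log_prod_pow (hp : ∀ i, (p i).Prime) (hinj : Function.Injective p) :
    Function.Injective fun α : ι → ℕ => Real.log (∏ i, p i ^ α i : ℕ) := by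
  intro α β h
  have hpos : ∀ γ : ι → ℕ, ((∏ i, p i ^ γ i : ℕ) : ℝ) ∈ Set.Ioi 0 := fun γ =>
    Set.mem_Ioi.mpr <| Nat.cast_pos.mpr <| Nat.pos_of_ne_zero <|
      prod_ne_zero_iff.mpr fun i _ => pow_ne_zero _ (hp i).ne_zero
  have hN : ∏ i, p i ^ α i = ∏ i, p i ^ β i := by
    exact_mod_cast Real.log_injOn_pos (hpos α) (hpos β) h
  funext i
  rw [← factorization_prod_pow_apply hp hinj α i, hN, factorization_prod_pow_apply hp hinj β i]

theorem prod_one_add_mul_natCast_cpow_div_two_pow [DecidableEq ι] (hp : ∀ i, p i ≠ 0)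
    (w : ι → ℂ) (k : ℕ) (t : ℝ) :
    ∏ i, ((1 + w i * (p i : ℂ) ^ (-(I * t))) / 2) ^ k =
      ∑ α ∈ Fintype.piFinset fun _ => range (k + 1),
        (∏ i, ((2 : ℂ)⁻¹ ^ k * k.choose (α i) * w i ^ α i)) *
          exp (↑(-Real.log (∏ i, p i ^ α i : ℕ) * t) * I) := by
  have hbinom : ∀ z : ℂ,
      ((1 + z) / 2) ^ k = ∑ r ∈ range (k + 1), (2 : ℂ)⁻¹ ^ k * k.choose r * z ^ r := by
    intro z
    rw [div_pow, add_comm, add_pow, sum_div]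
    refine sum_congr rfl fun r _ => ?_
    rw [one_pow, mul_one, div_eq_mul_inv, ← inv_pow]
    ring
  simp_rw [hbinom, prod_univ_sum]
  refine sum_congr rfl fun α _ => ?_
  rw [← natCast_cpow_neg_I_mul (prod_ne_zero_iff.mpr fun i _ => pow_ne_zero _ (hp i)),
    ← natCpowHom_apply, map_prod, ← prod_mul_distrib]
  refine prod_congr rfl fun i _ => ?_
  rw [map_pow, natCpowHom_apply, mul_pow]
  ring

theorem inv_add_one_pow_le_sum_norm_sq [DecidableEq ι] (w : ι → ℂ) (hw : ∀ i, ‖w i‖ = 1)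
    (k : ℕ) :
    ((k : ℝ) + 1)⁻¹ ^ Fintype.card ι ≤
      ∑ α ∈ Fintype.piFinset fun _ : ι => range (k + 1),
        ‖∏ i, ((2 : ℂ)⁻¹ ^ k * k.choose (α i) * w i ^ α i)‖ ^ 2 := by
  have hnorm : ∀ α : ι → ℕ, ‖∏ i, ((2 : ℂ)⁻¹ ^ k * k.choose (α i) * w i ^ α i)‖ ^ 2 =
      ∏ i, ((2 : ℝ)⁻¹ ^ k * k.choose (α i)) ^ 2 := by
    intro α
    rw [norm_prod, ← prod_pow]
    refine prod_congr rfl fun i _ => ?_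
    simp [hw i]
  simp_rw [hnorm, ← prod_univ_sum (fun _ : ι => range (k + 1))
    (fun _ r => ((2 : ℝ)⁻¹ ^ k * k.choose r) ^ 2), prod_const, card_univ]
  exact pow_le_pow_left₀ (by positivity) (inv_add_one_le_sum_sq_choose k) _

theorem norm_one_add_mul_div_two_le_one {w z : ℂ} (hw : ‖w‖ = 1) (hz : ‖z‖ = 1) :
    ‖(1 + w * z) / 2‖ ≤ 1 := by
  rw [norm_div, RCLike.norm_ofNat, div_le_one two_pos]
  refine (norm_add_le _ _).trans ?_
  rw [norm_one, norm_mul, hw, hz]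
  norm_num

theorem exists_pow_lt_inv_add_one_pow {q : ℝ} (hq0 : 0 ≤ q) (hq1 : q < 1) (m : ℕ) :
    ∃ k : ℕ, q ^ k < ((k : ℝ) + 1)⁻¹ ^ m := by
  have hlim : Tendsto (fun k : ℕ => 2 ^ m * ((k : ℝ) ^ m * q ^ k)) atTop (𝓝 0) := by
    simpa using (tendsto_pow_const_mul_const_pow_of_abs_lt_one m
      (by rwa [abs_of_nonneg hq0])).const_mul (2 ^ m)
  obtain ⟨k, hk1, hklt⟩ := ((eventually_ge_atTop 1).and (hlim.eventually_lt_const one_pos)).exists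
  refine ⟨k, ?_⟩
  rw [inv_pow, ← one_div, lt_div_iff₀ (by positivity)]
  have hk : (1 : ℝ) ≤ k := by exact_mod_cast hk1
  calc q ^ k * ((k : ℝ) + 1) ^ m ≤ q ^ k * (2 ^ m * (k : ℝ) ^ m) := by
        rw [← mul_pow]; gcongr; linarith
    _ = 2 ^ m * ((k : ℝ) ^ m * q ^ k) := by ring
    _ < 1 := hklt

/-- Bohr's mean-value argument: the mean of `‖∏ ((1 + w i (p i) ^ (-i t)) / 2) ^ k‖²` is at least
`(k + 1) ^ (-card ι)`, while its supremum is at most `r ^ (2 k)`. -/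
theorem inv_add_one_pow_card_le_sq_pow [DecidableEq ι] (hp : ∀ i, (p i).Prime)
    (hinj : Function.Injective p) (w : ι → ℂ) (hw : ∀ i, ‖w i‖ = 1) {r : ℝ}
    (hsmall : ∀ t : ℝ, ∃ i, ‖(1 + w i * (p i : ℂ) ^ (-(I * t))) / 2‖ ≤ r) (k : ℕ) :
    ((k : ℝ) + 1)⁻¹ ^ Fintype.card ι ≤ (r ^ 2) ^ k := by
  refine (inv_add_one_pow_le_sum_norm_sq w hw k).trans ?_
  rw [← pow_mul, mul_comm, pow_mul]
  refine sum_norm_sq_le_of_forall_norm_sum_exp_le _ _ _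
    (fun α _ β _ h => injective_log_prod_pow hp hinj (neg_inj.mp h)) fun t => ?_
  rw [← prod_one_add_mul_natCast_cpow_div_two_pow (fun i => (hp i).ne_zero), norm_prod]
  obtain ⟨i, hi⟩ := hsmall t
  have hfactor : ∀ j, ‖(1 + w j * (p j : ℂ) ^ (-(I * t))) / 2‖ ≤ 1 := fun j =>
    norm_one_add_mul_div_two_le_one (hw j) (norm_natCast_cpow_neg_I_mul (hp j).pos t)
  rw [← mul_prod_erase _ _ (mem_univ i), norm_pow]
  calc _ ≤ ‖(1 + w i * (p i : ℂ) ^ (-(I * t))) / 2‖ ^ k * 1 := by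
        gcongr
        exact prod_le_one (fun _ _ => norm_nonneg _) fun j _ => by
          rw [norm_pow]; exact pow_le_one₀ (norm_nonneg _) (hfactor j)
    _ ≤ r ^ k := by rw [mul_one]; gcongr

/-- Kronecker's theorem for the logarithms of distinct primes. -/
theorem exists_forall_lt_norm_one_add_mul_natCast_cpow_div_two (hp : ∀ i, (p i).Prime)
    (hinj : Function.Injective p) (w : ι → ℂ) (hw : ∀ i, ‖w i‖ = 1) {r : ℝ} (hr : r < 1) :
    ∃ t : ℝ, ∀ i, r < ‖(1 + w i * (p i : ℂ) ^ (-(I * t))) / 2‖ := by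
  classical
  by_contra! hsmall
  obtain ⟨i, hi⟩ := hsmall 0
  have hr0 : 0 ≤ r := (norm_nonneg _).trans hi
  obtain ⟨k, hk⟩ := exists_pow_lt_inv_add_one_pow (sq_nonneg r) (by nlinarith) (Fintype.card ι)
  exact (hk.trans_le (inv_add_one_pow_card_le_sq_pow hp hinj w hw hsmall k)).false

theorem exists_forall_norm_natCast_cpow_sub_lt (hp : ∀ i, (p i).Prime)
    (hinj : Function.Injective p) (w : ι → ℂ) (hw : ∀ i, ‖w i‖ = 1) {ε : ℝ} (hε : 0 < ε) :
    ∃ t : ℝ, ∀ i, ‖(p i : ℂ) ^ (-(I * t)) - w i‖ < ε := by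
  set δ := min ε 1
  have hδ : 0 < δ := lt_min hε one_pos
  obtain ⟨t, ht⟩ := exists_forall_lt_norm_one_add_mul_natCast_cpow_div_two hp hinj
    (fun i => conj (w i)) (by simpa using hw) (r := 1 - δ ^ 2 / 8) (by nlinarith)
  refine ⟨t, fun i => ?_⟩
  set z := conj (w i) * (p i : ℂ) ^ (-(I * t))
  have hz : ‖z‖ = 1 := by simp [z, hw i, norm_natCast_cpow_neg_I_mul (hp i).pos]
  have hdist : (p i : ℂ) ^ (-(I * t)) - w i = -w i * (1 - z) := by
    have : w i * conj (w i) = 1 := by rw [mul_conj', hw i]; norm_num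
    linear_combination -(p i : ℂ) ^ (-(I * t)) * this
  have hpar : ‖1 + z‖ ^ 2 + ‖1 - z‖ ^ 2 = 4 := by
    rw [parallelogram_law_with_norm ℂ, norm_one, hz]; norm_num
  have hclose := ht i
  rw [norm_div, RCLike.norm_ofNat] at hclose
  rw [hdist, norm_mul, norm_neg, hw i, one_mul]
  have hδ1 : δ ≤ 1 := min_le_right _ _
  have hsq : ‖1 - z‖ ^ 2 < δ ^ 2 := by nlinarith [norm_nonneg (1 + z)]
  exact (lt_of_pow_lt_pow_left₀ 2 hδ.le hsq).trans_le (min_le_left _ _)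

end Kronecker

theorem tendsto_of_forall_prime_tendsto {ι M : Type*} [Monoid M] [TopologicalSpace M]
    [ContinuousMul M] {l : Filter ι} {F : ι → ℕ →* M} {χ : ℕ → M} (hχ1 : χ 1 = 1)
    (hχmul : ∀ m n : ℕ, 1 ≤ m → 1 ≤ n → χ (m * n) = χ m * χ n)
    (hprime : ∀ p : ℕ, p.Prime → Tendsto (fun i => F i p) l (𝓝 (χ p))) {n : ℕ} (hn : 1 ≤ n) :
    Tendsto (fun i => F i n) l (𝓝 (χ n)) := by
  induction n using Nat.recOnMul with
  | zero => omega
  | one => simpa only [map_one, hχ1] using tendsto_const_nhds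
  | prime p hp => exact hprime p hp
  | mul a b ha hb =>
    have hab : a * b ≠ 0 := Nat.one_le_iff_ne_zero.mp hn
    have ha1 : 1 ≤ a := Nat.one_le_iff_ne_zero.mpr (left_ne_zero_of_mul hab)
    have hb1 : 1 ≤ b := Nat.one_le_iff_ne_zero.mpr (right_ne_zero_of_mul hab)
    simpa only [map_mul, hχmul a b ha1 hb1] using (ha ha1).mul (hb hb1)

theorem exists_seq_tendsto_natCast_cpow (χ : ℕ → ℂ) (hχ1 : χ 1 = 1)
    (hχmul : ∀ m n : ℕ, 1 ≤ m → 1 ≤ n → χ (m * n) = χ m * χ n)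
    (hχabs : ∀ p : ℕ, p.Prime → ‖χ p‖ = 1) :
    ∃ t : ℕ → ℝ, ∀ n : ℕ, 1 ≤ n →
      Tendsto (fun k => (n : ℂ) ^ (-(I * t k))) atTop (𝓝 (χ n)) := by
  have hK : ∀ K : ℕ, ∃ t : ℝ, ∀ p : ℕ, p.Prime → p < K →
      ‖(p : ℂ) ^ (-(I * t)) - χ p‖ < 1 / (K + 1) := by
    intro K
    have hP : ∀ q : {q // q ∈ (range K).filter Nat.Prime}, (q : ℕ).Prime :=
      fun q => (mem_filter.mp q.2).2
    obtain ⟨t, ht⟩ := exists_forall_norm_natCast_cpow_sub_lt hP Subtype.val_injective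
      (fun q => χ q) (fun q => hχabs q (hP q)) (ε := 1 / (K + 1)) (by positivity)
    exact ⟨t, fun p hp hpK => ht ⟨p, mem_filter.mpr ⟨mem_range.mpr hpK, hp⟩⟩⟩
  choose t ht using hK
  refine ⟨t, fun n hn =>
    tendsto_of_forall_prime_tendsto (F := fun k => natCpowHom (-(I * t k))) hχ1 hχmul
      (fun p hp => ?_) hn⟩
  rw [tendsto_iff_norm_sub_tendsto_zero]
  exact squeeze_zero' (Eventually.of_forall fun _ => norm_nonneg _)
    ((eventually_gt_atTop p).mono fun K hK => (ht K p hp hK).le)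
    tendsto_one_div_add_atTop_nhds_zero_nat

section DirichletPartialSums

theorem norm_natCast_cpow_neg_le {n : ℕ} (hn : 1 ≤ n) {θ : ℝ} {s : ℂ} (hs : θ < s.re) :
    ‖(n : ℂ) ^ (-s)‖ ≤ (n : ℝ) ^ (-θ) := by
  rw [norm_natCast_cpow_of_pos hn]
  exact Real.rpow_le_rpow_of_exponent_le (by exact_mod_cast hn) (by simp; linarith)

theorem lt_re_add_I_mul_ofReal {θ : ℝ} {s : ℂ} (hs : θ < s.re) (τ : ℝ) :
    θ < (s + I * τ).re := by
  simpa using hs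

theorem differentiableOn_of_tendstoUniformlyOn_sum_natCast_cpow {a : ℕ → ℂ} {f : ℂ → ℂ}
    {U : Set ℂ} (hU : IsOpen U)
    (hf : TendstoUniformlyOn (fun N s => ∑ n ∈ Icc 1 N, a n * (n : ℂ) ^ (-s)) f atTop U) :
    DifferentiableOn ℂ f U := by
  refine hf.tendstoLocallyUniformlyOn.differentiableOn (Eventually.of_forall fun N => ?_) hU
  refine DifferentiableOn.fun_sum fun n hn => ?_
  have hn0 : (n : ℂ) ≠ 0 := Nat.cast_ne_zero.mpr (by have := (mem_Icc.mp hn).1; omega)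
  exact (((differentiable_id.neg).const_cpow (Or.inl hn0)).const_mul _).differentiableOn

theorem tendstoUniformlyOn_sum_natCast_cpow_add_I_mul (a b : ℕ → ℂ) (θ : ℝ) {t : ℕ → ℝ}
    (ht : ∀ n : ℕ, 1 ≤ n → Tendsto (fun k => (n : ℂ) ^ (-(I * t k))) atTop (𝓝 (b n)))
    (N : ℕ) :
    TendstoUniformlyOn (fun k s => ∑ n ∈ Icc 1 N, a n * (n : ℂ) ^ (-(s + I * t k)))
      (fun s => ∑ n ∈ Icc 1 N, a n * b n * (n : ℂ) ^ (-s)) atTop {s | θ < s.re} := by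
  refine tendstoUniformlyOn_of_dist_le (b := fun k =>
    ∑ n ∈ Icc 1 N, ‖a n‖ * (n : ℝ) ^ (-θ) * ‖b n - (n : ℂ) ^ (-(I * t k))‖) ?_ ?_
  · simpa using tendsto_finsetSum (Icc 1 N) fun n hn =>
      (((tendsto_const_nhds (x := b n)).sub (ht n (mem_Icc.mp hn).1)).norm.const_mul
        (‖a n‖ * (n : ℝ) ^ (-θ)))
  · intro k s hs
    rw [dist_eq_norm, ← sum_sub_distrib]
    refine norm_sum_le_of_le _ fun n hn => ?_
    have hn1 := (mem_Icc.mp hn).1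
    rw [neg_add, cpow_add _ _ (Nat.cast_ne_zero.mpr (by omega)),
      show a n * b n * (n : ℂ) ^ (-s) - a n * ((n : ℂ) ^ (-s) * (n : ℂ) ^ (-(I * t k))) =
        a n * (n : ℂ) ^ (-s) * (b n - (n : ℂ) ^ (-(I * t k))) by ring,
      norm_mul, norm_mul]
    gcongr
    exact norm_natCast_cpow_neg_le hn1 hs

theorem exists_tendstoUniformlyOn_twist {a b : ℕ → ℂ} {θ : ℝ} {f : ℂ → ℂ} {t : ℕ → ℝ}
    (hf : TendstoUniformlyOn (fun N s => ∑ n ∈ Icc 1 N, a n * (n : ℂ) ^ (-s)) f atTop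
      {s | θ < s.re})
    (ht : ∀ n : ℕ, 1 ≤ n → Tendsto (fun k => (n : ℂ) ^ (-(I * t k))) atTop (𝓝 (b n))) :
    ∃ g : ℂ → ℂ,
      TendstoUniformlyOn (fun N s => ∑ n ∈ Icc 1 N, a n * b n * (n : ℂ) ^ (-s)) g atTop
        {s | θ < s.re} ∧
      TendstoUniformlyOn (fun k s => f (s + I * t k)) g atTop {s | θ < s.re} :=
  exists_tendstoUniformlyOn_of_tendstoUniformlyOn_comp
    (fun k _ hs => lt_re_add_I_mul_ofReal hs (t k)) hf
    (tendstoUniformlyOn_sum_natCast_cpow_add_I_mul a b θ ht)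

end DirichletPartialSums

section Hurwitz

open Metric

theorem AnalyticOnNhd.frequently_ne_of_not_eqOn_const {𝕜 E F : Type*}
    [NontriviallyNormedField 𝕜] [NormedAddCommGroup E] [NormedSpace 𝕜 E]
    [NormedAddCommGroup F] [NormedSpace 𝕜 F] {f : E → F} {U : Set E} {z₀ : E}
    (hf : AnalyticOnNhd 𝕜 f U) (hU : IsPreconnected U) (hz₀ : z₀ ∈ U)
    (hne : ¬Set.EqOn f (fun _ => f z₀) U) : ∃ᶠ z in 𝓝 z₀, f z ≠ f z₀ := fun h =>
  hne (hf.eqOn_of_preconnected_of_eventuallyEq analyticOnNhd_const hU hz₀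
    (h.mono fun _ hz => not_not.mp hz))

theorem exists_closedBall_subset_forall_le_norm_sub {f : ℂ → ℂ} {U : Set ℂ} {z₀ : ℂ}
    (hU : IsOpen U) (hf : DifferentiableOn ℂ f U) (hz₀ : z₀ ∈ U)
    (hne : ∃ᶠ z in 𝓝 z₀, f z ≠ f z₀) :
    ∃ r > 0, ∃ m > 0, closedBall z₀ r ⊆ U ∧ ∀ z ∈ sphere z₀ r, m ≤ ‖f z - f z₀‖ := by
  have hisol : ∀ᶠ z in 𝓝[≠] z₀, f z ≠ f z₀ :=
    ((hf.analyticAt (hU.mem_nhds hz₀)).eventually_eq_or_eventually_ne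
      analyticAt_const).resolve_left (by simpa [Filter.not_eventually] using hne)
  obtain ⟨r, hr, hsub⟩ : ∃ r > 0, closedBall z₀ r ⊆ {z | z ∈ U ∧ (z ≠ z₀ → f z ≠ f z₀)} :=
    nhds_basis_closedBall.mem_iff.mp
      ((hU.eventually_mem hz₀).and (eventually_nhdsWithin_iff.mp hisol))
  have hcont : ContinuousOn (fun z => ‖f z - f z₀‖) (sphere z₀ r) :=
    ((hf.continuousOn.mono fun z hz => (hsub (sphere_subset_closedBall hz)).1).sub
      continuousOn_const).norm
  obtain ⟨x, hx, hmin⟩ :=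
    (isCompact_sphere z₀ r).exists_isMinOn (NormedSpace.sphere_nonempty.mpr hr.le) hcont
  refine ⟨r, hr, ‖f x - f z₀‖, norm_sub_pos_iff.mpr ?_, fun z hz => (hsub hz).1,
    fun z hz => hmin hz⟩
  exact (hsub (sphere_subset_closedBall hx)).2 (ne_of_mem_sphere hx hr.ne')

/-- Hurwitz's theorem. -/
theorem TendstoUniformlyOn.exists_apply_eq {U : Set ℂ} (hU : IsOpen U) (hUc : IsPreconnected U)
    {g : ℕ → ℂ → ℂ} {h : ℂ → ℂ} (hg : ∀ k, DifferentiableOn ℂ (g k) U)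
    (hgh : TendstoUniformlyOn g h atTop U) {s₀ : ℂ} (hs₀ : s₀ ∈ U)
    (hh : ¬Set.EqOn h (fun _ => h s₀) U) : ∃ k, ∃ s ∈ U, g k s = h s₀ := by
  have hhd : DifferentiableOn ℂ h U :=
    hgh.tendstoLocallyUniformlyOn.differentiableOn (Eventually.of_forall hg) hU
  obtain ⟨r, hr, m, hm, hball, hsphere⟩ := exists_closedBall_subset_forall_le_norm_sub hU hhd hs₀
    ((hhd.analyticOnNhd hU).frequently_ne_of_not_eqOn_const hUc hs₀ hh)
  obtain ⟨k, hk⟩ := (Metric.tendstoUniformlyOn_iff.mp hgh (m / 4) (by positivity)).exists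
  have hgk : ∀ z ∈ sphere s₀ r, m / 2 ≤ ‖g k z - g k s₀‖ := by
    intro z hz
    have hz' : ‖h z - g k z‖ < m / 4 := by
      rw [← dist_eq_norm]; exact hk z (hball (sphere_subset_closedBall hz))
    have hs₀' : ‖g k s₀ - h s₀‖ < m / 4 := by rw [← dist_eq_norm, dist_comm]; exact hk s₀ hs₀
    have htri := norm_add₃_le (a := h z - g k z) (b := g k z - g k s₀) (c := g k s₀ - h s₀)
    rw [show h z - g k z + (g k z - g k s₀) + (g k s₀ - h s₀) = h z - h s₀ by ring] at htri
    linarith [hsphere z hz]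
  have hne : ∃ᶠ z in 𝓝 s₀, g k z ≠ g k s₀ := by
    refine ((hg k).analyticOnNhd hU).frequently_ne_of_not_eqOn_const hUc hs₀ fun hc => ?_
    obtain ⟨z, hz⟩ : (sphere s₀ r).Nonempty := NormedSpace.sphere_nonempty.mpr hr.le
    have := hgk z hz
    rw [hc (hball (sphere_subset_closedBall hz)), sub_self, norm_zero] at this
    linarith
  obtain ⟨s, hs, hval⟩ :=
    ((hg k).diffContOnCl_ball hball).ball_subset_image_closedBall hr hgk hne
      (show h s₀ ∈ ball (g k s₀) (m / 2 / 2) by rw [mem_ball]; linarith [hk s₀ hs₀])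
  exact ⟨k, s, hball hs, hval⟩

end Hurwitz

theorem Set.EqOn.const_of_tendsto_comp {α β : Type*} [TopologicalSpace β] [T2Space β]
    {U : Set α} {F G : α → β} {φ : ℕ → α → α} (hφ : ∀ k, Set.MapsTo (φ k) U U)
    (hFG : ∀ s ∈ U, Tendsto (fun k => F (φ k s)) atTop (𝓝 (G s))) {c : β}
    (hF : Set.EqOn F (fun _ => c) U) : Set.EqOn G (fun _ => c) U := fun s hs =>
  tendsto_nhds_unique (hFG s hs) (tendsto_const_nhds.congr fun k => (hF (hφ k hs)).symm)

section ImageOfLimit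

variable {U : Set ℂ} {F G : ℂ → ℂ} {φ ψ : ℕ → ℂ → ℂ}

theorem image_subset_of_tendstoUniformlyOn_comp (hU : IsOpen U) (hUc : IsPreconnected U)
    (hF : DifferentiableOn ℂ F U) (hφ : ∀ k, DifferentiableOn ℂ (φ k) U)
    (hφU : ∀ k, Set.MapsTo (φ k) U U)
    (hFG : TendstoUniformlyOn (fun k s => F (φ k s)) G atTop U)
    (hG : ¬∃ c, Set.EqOn G (fun _ => c) U) : G '' U ⊆ F '' U := by
  rintro _ ⟨s₀, hs₀, rfl⟩
  obtain ⟨k, s, hs, hval⟩ := hFG.exists_apply_eq hU hUc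
    (fun k => hF.comp (hφ k) (hφU k)) hs₀ fun h => hG ⟨G s₀, h⟩
  exact ⟨φ k s, hφU k hs, hval⟩

theorem image_eq_of_tendstoUniformlyOn_comp (hU : IsOpen U) (hUc : IsPreconnected U)
    (hF : DifferentiableOn ℂ F U) (hG : DifferentiableOn ℂ G U)
    (hφ : ∀ k, DifferentiableOn ℂ (φ k) U) (hψ : ∀ k, DifferentiableOn ℂ (ψ k) U)
    (hφU : ∀ k, Set.MapsTo (φ k) U U) (hψU : ∀ k, Set.MapsTo (ψ k) U U)
    (hFG : TendstoUniformlyOn (fun k s => F (φ k s)) G atTop U)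
    (hGF : TendstoUniformlyOn (fun k s => G (ψ k s)) F atTop U) : G '' U = F '' U := by
  by_cases hGc : ∃ c, Set.EqOn G (fun _ => c) U
  · obtain ⟨c, hc⟩ := hGc
    rw [hc.image_eq, (hc.const_of_tendsto_comp hψU fun s hs => hGF.tendsto_at hs).image_eq]
  · refine (image_subset_of_tendstoUniformlyOn_comp hU hUc hF hφ hφU hFG hGc).antisymm
      (image_subset_of_tendstoUniformlyOn_comp hU hUc hG hψ hψU hGF fun ⟨c, hc⟩ => hGc
        ⟨c, hc.const_of_tendsto_comp hφU fun s hs => hFG.tendsto_at hs⟩)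

theorem image_eq_of_tendstoUniformlyOn_add_I_mul {θ : ℝ} {t u : ℕ → ℝ}
    (hF : DifferentiableOn ℂ F {s | θ < s.re}) (hG : DifferentiableOn ℂ G {s | θ < s.re})
    (hFG : TendstoUniformlyOn (fun k s => F (s + I * t k)) G atTop {s | θ < s.re})
    (hGF : TendstoUniformlyOn (fun k s => G (s + I * u k)) F atTop {s | θ < s.re}) :
    G '' {s | θ < s.re} = F '' {s | θ < s.re} :=
  image_eq_of_tendstoUniformlyOn_comp (isOpen_lt continuous_const continuous_re)
    (convex_halfSpace_re_gt θ).isPreconnected hF hG (fun _ => by fun_prop) (fun _ => by fun_prop)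
    (fun k _ hs => lt_re_add_I_mul_ofReal hs (t k))
    (fun k _ hs => lt_re_add_I_mul_ofReal hs (u k)) hFG hGF

end ImageOfLimit

/-- If the partial sums of `f(s) = ∑ a(n) n^{-s}` converge uniformly on the
half-plane `Re s > θ`, then the twisted series `f_χ(s) = ∑ a(n) χ(n) n^{-s}` also converges
there and the images of the half-plane under `f` and `f_χ` coincide. -/
theorem twist_preserves_image
    (a χ : ℕ → ℂ)
    (hχ1 : χ 1 = 1)
    (hχmul : ∀ m n : ℕ, 1 ≤ m → 1 ≤ n → χ (m * n) = χ m * χ n)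
    (hχabs : ∀ n : ℕ, 1 ≤ n → ‖χ n‖ = 1)
    (θ : ℝ) (f : ℂ → ℂ)
    (hunif : TendstoUniformlyOn
      (fun (N : ℕ) (s : ℂ) => ∑ n ∈ Finset.Icc 1 N, a n * (n : ℂ) ^ (-s))
      f atTop {s : ℂ | θ < s.re}) :
    ∃ fχ : ℂ → ℂ,
      (∀ s : ℂ, θ < s.re →
        Tendsto (fun N : ℕ => ∑ n ∈ Finset.Icc 1 N, a n * χ n * (n : ℂ) ^ (-s))
          atTop (𝓝 (fχ s))) ∧
      fχ '' {s : ℂ | θ < s.re} = f '' {s : ℂ | θ < s.re} := by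
  have hχabs' : ∀ p : ℕ, p.Prime → ‖χ p‖ = 1 := fun p hp => hχabs p hp.one_lt.le
  obtain ⟨t, ht⟩ := exists_seq_tendsto_natCast_cpow χ hχ1 hχmul hχabs'
  obtain ⟨u, hu⟩ := exists_seq_tendsto_natCast_cpow (fun n => (χ n)⁻¹) (by simp [hχ1])
    (fun m n hm hn => by rw [hχmul m n hm hn, mul_inv]) fun p hp => by simp [hχabs' p hp]
  obtain ⟨fχ, hfχ, hf_fχ⟩ := exists_tendstoUniformlyOn_twist hunif ht
  obtain ⟨g, hg, hfχ_g⟩ := exists_tendstoUniformlyOn_twist hfχ hu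
  have hsum : (fun (N : ℕ) (s : ℂ) => ∑ n ∈ Icc 1 N, a n * χ n * (χ n)⁻¹ * (n : ℂ) ^ (-s)) =
      fun N s => ∑ n ∈ Icc 1 N, a n * (n : ℂ) ^ (-s) := by
    refine funext₂ fun N s => sum_congr rfl fun n hn => ?_
    have hχn : χ n ≠ 0 := norm_ne_zero_iff.mp (by rw [hχabs n (mem_Icc.mp hn).1]; norm_num)
    rw [mul_assoc (a n), mul_inv_cancel₀ hχn, mul_one]
  rw [hsum] at hg
  have hgf : Set.EqOn g f {s | θ < s.re} := fun s hs =>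
    tendsto_nhds_unique (hg.tendsto_at hs) (hunif.tendsto_at hs)
  have hH : IsOpen {s : ℂ | θ < s.re} := isOpen_lt continuous_const continuous_re
  refine ⟨fχ, fun s hs => hfχ.tendsto_at hs, image_eq_of_tendstoUniformlyOn_add_I_mul
    (differentiableOn_of_tendstoUniformlyOn_sum_natCast_cpow hH hunif)
    (differentiableOn_of_tendstoUniformlyOn_sum_natCast_cpow hH hfχ)
    hf_fχ (hfχ_g.congr_right hgf)⟩
end
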